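/- There exists n₀ such that for every integer n ≥ n₀, every prime Δ with n⁴/2 ≤ Δ ≤ n⁴, and every set V of fewer than n² {0,1}-vectors in (ZMod Δ)ⁿ with the property that for every integer k with √n ≤ k ≤ n and every subset W ⊆ V with |W| ≤ k/(22·log₂ k) the restrictions of the vectors of W to their last k coordinates are linearly independent over ZMod Δ, there exists a {0,1}-vector v ∈ (ZMod Δ)ⁿ not in V such that V ∪ {v} still has this property. -/

import Mathlib

/-!
A counting argument over the `2ⁿ` vectors of the `{0,1}`-cube. If adding `v` spoils the property,
then for some `√n ≤ k ≤ n` the restriction `π_k v` lies in the span of the restrictions of a set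
`W ⊆ V` with `|W| ≤ m = ⌊k / (22 log₂ k)⌋`. For fixed `k` and `W` at most `Δ^m · 2^(n-k)` cube
vectors do so, and there are at most `(m+1) n^(2m)` such `W`; with `Δ ≤ n⁴` and `log₂ n ≤ 2 log₂ k`
this is at most `(n+1) · 2^(6k/11) · 2^(n-k) ≤ (n+1) · 2^(n - 5√n/11)`. Summing over `k`, fewer than
`2ⁿ - n²` cube vectors are excluded, because `(n+1)² = o(2^(5√n/11))`.
-/

/-- The restriction of a vector `v ∈ (ZMod Δ)ⁿ` to its last `k` coordinates
(coordinates `n-k, …, n-1`). -/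
def lastCoords {α : Type*} (n k : ℕ) (hk : k ≤ n) (v : Fin n → α) : Fin k → α :=
  fun i => v ⟨n - k + i.1, by omega⟩

/-- The property of a set `V` of vectors in `(ZMod Δ)ⁿ`: for every `√n ≤ k ≤ n`,
any subset of at most `k/(22·log₂ k)` vectors of `V` restricted to the last `k`
coordinates is linearly independent over `ZMod Δ`. -/
def goodSet (n Δ : ℕ) (V : Finset (Fin n → ZMod Δ)) : Prop :=
  ∀ k : ℕ, Real.sqrt n ≤ (k : ℝ) → ∀ hk : k ≤ n,
    ∀ W ⊆ V, (W.card : ℝ) ≤ (k : ℝ) / (22 * Real.logb 2 k) →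
      LinearIndependent (ZMod Δ) (fun w : W => lastCoords n k hk w.1)

open Finset Filter Submodule

section Counting

variable {α : Type*} {n k : ℕ}

variable (n) in
def cube (R : Type*) [Zero R] [One R] [DecidableEq R] : Finset (Fin n → R) :=
  Fintype.piFinset fun _ => {0, 1}

lemma mem_cube {R : Type*} [Zero R] [One R] [DecidableEq R] {v : Fin n → R} :
    v ∈ cube n R ↔ ∀ i, v i = 0 ∨ v i = 1 := by
  simp [cube]

lemma card_cube (R : Type*) [MulZeroOneClass R] [Nontrivial R] [DecidableEq R] :
    #(cube n R) = 2 ^ n := by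
  simp [cube, card_pair zero_ne_one]

lemma eq_of_lastCoords_eq (hk : k ≤ n) {v w : Fin n → α}
    (hlast : lastCoords n k hk v = lastCoords n k hk w)
    (hinit : ∀ i : Fin n, i.1 < n - k → v i = w i) : v = w := by
  funext i
  by_cases hi : i.1 < n - k
  · exact hinit i hi
  · have := congrFun hlast ⟨i.1 - (n - k), by omega⟩
    simp only [lastCoords] at this
    convert this using 2 <;> ext <;> simp <;> omega

lemma card_filter_lastCoords_le [Fintype α] (hk : k ≤ n) (t : Finset α)
    (p : (Fin k → α) → Prop) [DecidablePred p] :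
    #{v ∈ Fintype.piFinset fun _ => t | p (lastCoords n k hk v)} ≤ #{x | p x} * #t ^ (n - k) := by
  let init (v : Fin n → α) : Fin (n - k) → α := fun j => v (Fin.castLE (by omega) j)
  calc _ ≤ #(univ.filter p ×ˢ Fintype.piFinset fun _ => t) := by
        refine card_le_card_of_injOn (fun v => (lastCoords n k hk v, init v)) ?_ ?_
        · intro v hv
          simp only [coe_filter, Fintype.mem_piFinset] at hv
          simp [hv.2, init, hv.1]
        · intro v _ w _ h
          simp only [Prod.mk.injEq] at h
          exact eq_of_lastCoords_eq hk h.1 fun i hi => congrFun h.2 ⟨i, hi⟩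
    _ = _ := by rw [card_product, Fintype.card_piFinset, prod_const, card_univ, Fintype.card_fin]

end Counting

lemma card_filter_mem_span_range_le {R M ι : Type*} [Semiring R] [Fintype R] [AddCommMonoid M]
    [Module R M] [Fintype M] [Fintype ι] (v : ι → M)
    [DecidablePred (· ∈ span R (Set.range v))] :
    #{x | x ∈ span R (Set.range v)} ≤ Fintype.card R ^ Fintype.card ι := by
  classical
  calc _ ≤ #(univ.image fun c : ι → R => ∑ i, c i • v i) := by
        refine card_le_card fun x hx => ?_
        obtain ⟨c, rfl⟩ := mem_span_range_iff_exists_fun R |>.1 (mem_filter.1 hx).2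
        exact mem_image_of_mem _ (mem_univ c)
    _ ≤ _ := card_image_le.trans_eq (by rw [card_univ, Fintype.card_fun])

lemma card_filter_powerset_card_le {α : Type*} (V : Finset α) (m : ℕ) :
    #{W ∈ V.powerset | #W ≤ m} ≤ (m + 1) * (#V + 1) ^ m := by
  classical
  calc _ ≤ #((range (m + 1)).biUnion V.powersetCard) := by
        refine card_le_card fun W hW => ?_
        rw [mem_filter, mem_powerset] at hW
        exact mem_biUnion.2
          ⟨#W, mem_range.2 (Nat.lt_succ_of_le hW.2), mem_powersetCard.2 ⟨hW.1, rfl⟩⟩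
    _ ≤ #(range (m + 1)) * (#V + 1) ^ m := by
        refine card_biUnion_le_card_mul _ _ _ fun s hs => ?_
        rw [card_powersetCard]
        calc (#V).choose s ≤ #V ^ s := Nat.choose_le_pow _ _
          _ ≤ (#V + 1) ^ s := Nat.pow_le_pow_left (by omega) _
          _ ≤ (#V + 1) ^ m := Nat.pow_le_pow_right (by omega) (Nat.le_of_lt_succ (mem_range.1 hs))
    _ = _ := by rw [card_range]

lemma exists_mem_span_of_not_goodSet_insert {n Δ : ℕ} [Fact Δ.Prime] {V : Finset (Fin n → ZMod Δ)}
    {v : Fin n → ZMod Δ} (hV : goodSet n Δ V) (hv : ¬ goodSet n Δ (insert v V)) :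
    ∃ k, ∃ hk : k ≤ n, √(n : ℝ) ≤ k ∧ ∃ W ⊆ V, (#W : ℝ) + 1 ≤ k / (22 * Real.logb 2 k) ∧
      lastCoords n k hk v ∈ span (ZMod Δ) (lastCoords n k hk '' W) := by
  classical
  simp only [goodSet, not_forall] at hv
  obtain ⟨k, hkn, hk, W, hWV, hW, hdep⟩ := hv
  have herase : W.erase v ⊆ V := fun x hx => by
    simpa [(mem_erase.1 hx).1] using hWV (mem_of_mem_erase hx)
  by_cases hvW : v ∈ W
  · refine ⟨k, hk, hkn, W.erase v, herase, ?_, ?_⟩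
    · exact_mod_cast (card_erase_add_one hvW).symm ▸ hW
    · have hind :
          LinearIndepOn (ZMod Δ) (lastCoords n k hk) (↑(W.erase v) : Set (Fin n → ZMod Δ)) :=
        hV k hkn hk _ herase (le_trans (by exact_mod_cast card_erase_le) hW)
      by_contra hspan
      have := (linearIndepOn_insert (notMem_erase v W)).2 ⟨hind, hspan⟩
      rw [← coe_insert, insert_erase hvW] at this
      exact hdep this
  · have hWsub : W ⊆ V := fun x hx => by simpa [ne_of_mem_of_not_mem hx hvW] using hWV hx
    exact (hdep (hV k hkn hk W hWsub hW)).elim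

section SpannedCube

variable {R : Type*} [Semiring R] [DecidableEq R] {n k : ℕ}

open Classical in
noncomputable def spannedCube (V : Finset (Fin n → R)) (hk : k ≤ n) (m : ℕ) : Finset (Fin n → R) :=
  {W ∈ V.powerset | #W ≤ m}.biUnion fun W =>
    {v ∈ cube n R | lastCoords n k hk v ∈ span R (lastCoords n k hk '' W)}

lemma card_spannedCube_le [Fintype R] [Nontrivial R] (V : Finset (Fin n → R)) (hk : k ≤ n) (m : ℕ) :
    #(spannedCube V hk m) ≤ (m + 1) * (#V + 1) ^ m * (Fintype.card R ^ m * 2 ^ (n - k)) := by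
  classical
  refine (card_biUnion_le_card_mul _ _ _ fun W hW => ?_).trans
    (Nat.mul_le_mul_right _ (card_filter_powerset_card_le V m))
  rw [Set.image_eq_range]
  set S := span R (Set.range fun w : W => lastCoords n k hk (w : Fin n → R))
  calc _ ≤ #(univ.filter (· ∈ S)) * #({0, 1} : Finset R) ^ (n - k) :=
        card_filter_lastCoords_le hk _ (· ∈ S)
    _ ≤ Fintype.card R ^ #W * 2 ^ (n - k) := by
        rw [card_pair zero_ne_one]
        exact Nat.mul_le_mul_right _
          ((card_filter_mem_span_range_le _).trans_eq (by rw [Fintype.card_coe]))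
    _ ≤ _ := Nat.mul_le_mul_right _ (Nat.pow_le_pow_right Fintype.card_pos (mem_filter.1 hW).2)

end SpannedCube

section Estimates

lemma pow_le_two_rpow_of_le_div_logb {n k m : ℕ} (hn : 1 ≤ n) (hk : 2 ≤ k) (hnk : (n : ℝ) ≤ k ^ 2)
    (hm : (m : ℝ) ≤ k / (22 * Real.logb 2 k)) : (n : ℝ) ^ (6 * m) ≤ 2 ^ ((6 / 11) * (k : ℝ)) := by
  have hn' : (1 : ℝ) ≤ n := by exact_mod_cast hn
  have hL : 0 < Real.logb 2 k := Real.logb_pos one_lt_two (by exact_mod_cast hk)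
  have hlogn : Real.logb 2 n ≤ 2 * Real.logb 2 k := by
    calc Real.logb 2 n ≤ Real.logb 2 ((k : ℝ) ^ 2) :=
          Real.logb_le_logb_of_le one_lt_two (by positivity) hnk
      _ = 2 * Real.logb 2 k := by rw [Real.logb_pow]; push_cast; ring
  rw [← Real.rpow_logb zero_lt_two one_lt_two.ne' (by positivity : (0 : ℝ) < n),
    ← Real.rpow_natCast, ← Real.rpow_mul zero_le_two]
  refine Real.rpow_le_rpow_of_exponent_le one_le_two ?_
  calc Real.logb 2 n * ((6 * m : ℕ) : ℝ) = 6 * m * Real.logb 2 n := by push_cast; ring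
    _ ≤ 6 * (k / (22 * Real.logb 2 k)) * (2 * Real.logb 2 k) := by
        gcongr
        exact Real.logb_nonneg one_lt_two hn'
    _ = (6 / 11) * k := by field_simp; ring

lemma spannedCube_bound_le {n k m N Δ : ℕ} (hn : 4 ≤ n) (hkn : k ≤ n) (hk : √(n : ℝ) ≤ k)
    (hm : (m : ℝ) ≤ k / (22 * Real.logb 2 k)) (hN : N + 1 ≤ n ^ 2) (hΔ : (Δ : ℝ) ≤ (n : ℝ) ^ 4) :
    (((m + 1) * (N + 1) ^ m * (Δ ^ m * 2 ^ (n - k)) : ℕ) : ℝ) ≤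
      (n + 1) * 2 ^ ((n : ℝ) - (5 / 11) * √(n : ℝ)) := by
  have hn' : (4 : ℝ) ≤ n := by exact_mod_cast hn
  have hsqrt : 2 ≤ √(n : ℝ) := Real.le_sqrt_of_sq_le (by linarith)
  have hk2 : 2 ≤ k := by exact_mod_cast hsqrt.trans hk
  have hL : 1 ≤ Real.logb 2 k := by
    rw [Real.le_logb_iff_rpow_le one_lt_two (by positivity), Real.rpow_one]
    exact_mod_cast hk2
  have hmn : (m : ℝ) + 1 ≤ n + 1 := by
    have : (k : ℝ) / (22 * Real.logb 2 k) ≤ k := by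
      exact div_le_self (by positivity) (by linarith)
    have : (k : ℝ) ≤ n := by exact_mod_cast hkn
    linarith
  have hpow : ((N + 1 : ℕ) : ℝ) ^ m * (Δ : ℝ) ^ m ≤ (n : ℝ) ^ (6 * m) := by
    rw [← mul_pow, pow_mul]
    refine pow_le_pow_left₀ (by positivity) ?_ m
    calc ((N + 1 : ℕ) : ℝ) * Δ ≤ (n : ℝ) ^ 2 * (n : ℝ) ^ 4 := by
          gcongr
          exact_mod_cast hN
      _ = (n : ℝ) ^ 6 := by ring
  have hnk : (n : ℝ) ≤ k ^ 2 := by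
    rw [← Real.sq_sqrt (Nat.cast_nonneg n)]
    gcongr
  calc (((m + 1) * (N + 1) ^ m * (Δ ^ m * 2 ^ (n - k)) : ℕ) : ℝ)
      = ((m : ℝ) + 1) * (((N + 1 : ℕ) : ℝ) ^ m * (Δ : ℝ) ^ m) * 2 ^ ((n : ℝ) - k) := by
        rw [← Nat.cast_sub hkn, Real.rpow_natCast]; push_cast; ring
    _ ≤ (n + 1) * 2 ^ ((6 / 11) * (k : ℝ)) * 2 ^ ((n : ℝ) - k) := by
        gcongr
        exact hpow.trans (pow_le_two_rpow_of_le_div_logb (by omega) hk2 hnk hm)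
    _ = (n + 1) * 2 ^ ((n : ℝ) - (5 / 11) * k) := by
        rw [mul_assoc, ← Real.rpow_add zero_lt_two]; ring_nf
    _ ≤ (n + 1) * 2 ^ ((n : ℝ) - (5 / 11) * √(n : ℝ)) := by
        gcongr
        exact one_le_two

lemma eventually_two_mul_sq_le_two_rpow_sqrt :
    ∀ᶠ n : ℕ in atTop, 2 * ((n : ℝ) + 1) ^ 2 ≤ 2 ^ ((5 / 11) * √(n : ℝ)) := by
  have hb : 0 < (5 / 11) * Real.log 2 := by positivity
  have hsqrt : Tendsto (fun n : ℕ => √(n : ℝ)) atTop atTop :=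
    Real.tendsto_sqrt_atTop.comp tendsto_natCast_atTop_atTop
  filter_upwards [hsqrt.eventually ((isLittleO_pow_exp_pos_mul_atTop 4 hb).def
    (by norm_num : (0 : ℝ) < 1 / 8)), eventually_ge_atTop 1] with n hn hn1
  have hn1' : (1 : ℝ) ≤ n := by exact_mod_cast hn1
  rw [Real.norm_of_nonneg (by positivity), Real.norm_of_nonneg (by positivity)] at hn
  have hsqrt4 : √(n : ℝ) ^ 4 = (n : ℝ) ^ 2 := by
    rw [show 4 = 2 * 2 from rfl, pow_mul, Real.sq_sqrt (Nat.cast_nonneg n)]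
  calc 2 * ((n : ℝ) + 1) ^ 2 ≤ 8 * √(n : ℝ) ^ 4 := by rw [hsqrt4]; nlinarith
    _ ≤ Real.exp (5 / 11 * Real.log 2 * √(n : ℝ)) := by linarith
    _ = 2 ^ ((5 / 11) * √(n : ℝ)) := by rw [Real.rpow_def_of_pos zero_lt_two]; ring_nf

end Estimates

section Main

variable {n Δ : ℕ} [Fact Δ.Prime] {V : Finset (Fin n → ZMod Δ)}

lemma card_spannedCube_le_two_rpow (hn : 4 ≤ n) (hΔ : (Δ : ℝ) ≤ (n : ℝ) ^ 4) (hV : #V < n ^ 2)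
    {k : ℕ} (hkn : k ≤ n) (hk : √(n : ℝ) ≤ k) :
    (#(spannedCube V hkn ⌊(k : ℝ) / (22 * Real.logb 2 k)⌋₊) : ℝ) ≤
      (n + 1) * 2 ^ ((n : ℝ) - (5 / 11) * √(n : ℝ)) := by
  have hk1 : (1 : ℝ) ≤ k := le_trans (Real.one_le_sqrt.2 (by exact_mod_cast (by omega : 1 ≤ n))) hk
  have hm := Nat.floor_le (div_nonneg (Nat.cast_nonneg k)
    (mul_nonneg (by norm_num : (0 : ℝ) ≤ 22) (Real.logb_nonneg one_lt_two hk1)))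
  refine (Nat.cast_le.2 (card_spannedCube_le V hkn _)).trans ?_
  rw [ZMod.card]
  exact spannedCube_bound_le hn hkn hk hm hV hΔ

variable (V) in
open Classical in
noncomputable def exceptionalVectors : Finset (Fin n → ZMod Δ) :=
  (univ.filter fun k : Fin (n + 1) => √(n : ℝ) ≤ k).biUnion fun k =>
    spannedCube V k.is_le ⌊(k : ℝ) / (22 * Real.logb 2 k)⌋₊

lemma mem_exceptionalVectors_of_not_goodSet_insert (hV : goodSet n Δ V) {v : Fin n → ZMod Δ}
    (hvc : v ∈ cube n (ZMod Δ)) (hbad : ¬ goodSet n Δ (insert v V)) :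
    v ∈ exceptionalVectors V := by
  classical
  obtain ⟨k, hkn, hk, W, hWV, hW, hspan⟩ := exists_mem_span_of_not_goodSet_insert hV hbad
  refine mem_biUnion.2 ⟨⟨k, by omega⟩, mem_filter.2 ⟨mem_univ _, hk⟩, mem_biUnion.2 ⟨W, ?_, ?_⟩⟩
  · exact mem_filter.2 ⟨mem_powerset.2 hWV, Nat.le_floor (by linarith)⟩
  · exact mem_filter.2 ⟨hvc, hspan⟩

lemma exists_mem_cube_notMem_goodSet_insert (hn : 4 ≤ n)
    (hgrowth : 2 * ((n : ℝ) + 1) ^ 2 ≤ 2 ^ ((5 / 11) * √(n : ℝ)))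
    (hΔ : (Δ : ℝ) ≤ (n : ℝ) ^ 4) (hVcard : #V < n ^ 2) (hV : goodSet n Δ V) :
    ∃ v ∈ cube n (ZMod Δ), v ∉ V ∧ goodSet n Δ (insert v V) := by
  classical
  set bad := exceptionalVectors V
  set c := (5 / 11) * √(n : ℝ)
  have hbad : (#bad : ℝ) ≤ (n + 1) * ((n + 1) * 2 ^ ((n : ℝ) - c)) := by
    calc (#bad : ℝ) ≤ ∑ k ∈ univ.filter fun k : Fin (n + 1) => √(n : ℝ) ≤ k,
          (#(spannedCube V k.is_le ⌊(k : ℝ) / (22 * Real.logb 2 k)⌋₊) : ℝ) := by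
          exact_mod_cast card_biUnion_le
      _ ≤ ∑ _k ∈ (univ : Finset (Fin (n + 1))), ((n : ℝ) + 1) * (2 : ℝ) ^ ((n : ℝ) - c) :=
          sum_le_sum_of_subset_of_nonneg (filter_subset _ _) (fun _ _ _ => by positivity)
            |>.trans' (sum_le_sum fun k hk =>
              card_spannedCube_le_two_rpow hn hΔ hVcard k.is_le (mem_filter.1 hk).2)
      _ = _ := by simp
  have hcard : ((#(V ∪ bad) : ℕ) : ℝ) < ((#(cube n (ZMod Δ)) : ℕ) : ℝ) := by
    have hn1 : (1 : ℝ) ≤ n := by exact_mod_cast (by omega : 1 ≤ n)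
    have h2c : (2 : ℝ) ^ c ≤ 2 ^ n := by
      rw [← Real.rpow_natCast]
      refine Real.rpow_le_rpow_of_exponent_le one_le_two ?_
      simp only [c]
      linarith [Real.sqrt_le_self_iff.2 (Or.inr hn1), Real.sqrt_nonneg (n : ℝ)]
    have hexc : ((n : ℝ) + 1) * ((n + 1) * 2 ^ ((n : ℝ) - c)) ≤ 2 ^ n / 2 := by
      rw [Real.rpow_sub zero_lt_two, Real.rpow_natCast,
        show ((n : ℝ) + 1) * ((n + 1) * (2 ^ n / 2 ^ c)) = (n + 1) ^ 2 * 2 ^ n / 2 ^ c by ring,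
        div_le_div_iff₀ (by positivity) two_pos]
      nlinarith [pow_pos (two_pos : (0 : ℝ) < 2) n]
    have hV' : (#V : ℝ) < (n : ℝ) ^ 2 := by exact_mod_cast hVcard
    rw [card_cube, Nat.cast_pow, Nat.cast_ofNat]
    calc ((#(V ∪ bad) : ℕ) : ℝ) ≤ #V + #bad := by exact_mod_cast card_union_le _ _
      _ < 2 ^ n := by nlinarith
  obtain ⟨v, hv, hvbad⟩ := exists_mem_notMem_of_card_lt_card (by exact_mod_cast hcard)
  refine ⟨v, hv, fun h => hvbad (mem_union_left _ h), ?_⟩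
  by_contra hnot
  exact hvbad (mem_union_right _ (mem_exceptionalVectors_of_not_goodSet_insert hV hv hnot))

end Main

theorem stmt1 :
    ∃ n₀ : ℕ, ∀ n : ℕ, n₀ ≤ n → ∀ Δ : ℕ, Δ.Prime →
      (n : ℝ)^4 / 2 ≤ (Δ : ℝ) → (Δ : ℝ) ≤ (n : ℝ)^4 →
      ∀ V : Finset (Fin n → ZMod Δ),
        V.card < n^2 →
        (∀ v ∈ V, ∀ i, v i = 0 ∨ v i = 1) →
        goodSet n Δ V →
        ∃ v : Fin n → ZMod Δ, v ∉ V ∧ (∀ i, v i = 0 ∨ v i = 1) ∧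
          goodSet n Δ (insert v V) := by
  obtain ⟨n₀, hn₀⟩ :=
    eventually_atTop.1 ((eventually_ge_atTop 4).and eventually_two_mul_sq_le_two_rpow_sqrt)
  refine ⟨n₀, fun n hn Δ hΔ _ hΔn V hVcard _ hV => ?_⟩
  have := Fact.mk hΔ
  obtain ⟨v, hv, hvV, hgood⟩ :=
    exists_mem_cube_notMem_goodSet_insert (hn₀ n hn).1 (hn₀ n hn).2 hΔn hVcard hV
  exact ⟨v, hvV, mem_cube.1 hv, hgood⟩
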